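/- Suppose there exist $C_1, C_2 > 0$ and $\alpha \in (0,1)$ such that $\frac{C_1}{1+\lambda} \le E_{\alpha}(-\lambda) \le \frac{C_2}{1+\lambda}$ for all $\lambda \ge 0$. Let $(\lambda_n)$ be an increasing sequence with $\lambda_n \to \infty$, $\lambda_n > e$, fix $\beta, T > 0$, and set $\epsilon_n = \frac{2\ln\ln\lambda_n}{\ln\lambda_n}$, $\Phi_n$ of norm $\frac{1}{\lambda_n^{\beta}\ln\lambda_n}$. Then $\|\Phi_n\| \to 0$, the quantities $u_n := \frac{1}{\lambda_n^{\beta}\ln\lambda_n} \cdot \frac{1}{E_{\alpha}(-\lambda_n^{\beta} T^{\alpha})}$ remain bounded, but $\tilde u_n := \frac{1}{\lambda_n^{\beta}\ln\lambda_n}\cdot \frac{1}{E_{\alpha}(-\lambda_n^{\beta+\epsilon_n} T^{\alpha})} \to \infty$ as $n \to \infty$. -/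

import Mathlib

open Filter Real

/-!
The two-sided bound turns `1 / E μ` into `(1 + μ) / C` up to constants. At `μ = λ^β T^α` the
datum norm `1 / (λ^β ln λ)` absorbs the factor `λ^β`, so `uₙ` stays bounded. The perturbation
`εₙ = 2 ln ln λₙ / ln λₙ` is chosen so that `λₙ^{εₙ} = (ln λₙ)²`; at `μ = λ^{β+ε} T^α` the extra
factor `(ln λ)²` beats the remaining `1 / ln λ`, and `ũₙ ≳ ln λₙ → ∞`.
-/

theorem rpow_add_two_mul_log_log_div_log {x : ℝ} (hx : 1 < x) (β : ℝ) :
    x ^ (β + 2 * log (log x) / log x) = x ^ β * log x ^ 2 := by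
  have hexp : 2 * log (log x) / log x = logb x (log x ^ 2) := by
    rw [logb, log_pow]
    push_cast
    ring
  rw [rpow_add (by linarith), hexp, rpow_logb (by linarith) hx.ne' (pow_pos (log_pos hx) 2)]

theorem tendsto_rpow_mul_log_atTop {β : ℝ} (hβ : 0 < β) :
    Tendsto (fun x => x ^ β * log x) atTop atTop :=
  (tendsto_rpow_atTop hβ).atTop_mul_atTop₀ tendsto_log_atTop

theorem one_div_le_of_div_one_add_le {C e μ : ℝ} (hC : 0 < C) (hμ : 0 ≤ μ)
    (hlow : C / (1 + μ) ≤ e) : 1 / e ≤ (1 + μ) / C := by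
  simpa only [one_div_div] using one_div_le_one_div_of_le (by positivity) hlow

theorem div_le_one_div_of_le_div_one_add {C e μ : ℝ} (he : 0 < e) (hup : e ≤ C / (1 + μ)) :
    (1 + μ) / C ≤ 1 / e := by
  simpa only [one_div_div] using one_div_le_one_div_of_le he hup

section TwoSidedBound

variable {E : ℝ → ℝ} {C₁ C₂ : ℝ}

theorem one_div_mul_one_div_le {P L c : ℝ} (hC₁ : 0 < C₁)
    (hlow : ∀ μ, 0 ≤ μ → C₁ / (1 + μ) ≤ E μ) (hP : 1 ≤ P) (hL : 1 ≤ L) (hc : 0 ≤ c) :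
    1 / (P * L) * (1 / E (P * c)) ≤ (1 + c) / C₁ := by
  have hμ : 0 ≤ P * c := by positivity
  have hPL : 0 < P * L := by positivity
  have hnum : 1 + P * c ≤ (1 + c) * (P * L) := by nlinarith
  calc 1 / (P * L) * (1 / E (P * c))
      ≤ 1 / (P * L) * ((1 + P * c) / C₁) :=
        mul_le_mul_of_nonneg_left (one_div_le_of_div_one_add_le hC₁ hμ (hlow _ hμ))
          (by positivity)
    _ = (1 + P * c) / (P * L) / C₁ := by ring
    _ ≤ (1 + c) / C₁ := by
        gcongr
        exact (div_le_iff₀ hPL).mpr hnum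

theorem mul_div_le_one_div_mul_one_div {P L c : ℝ} (hC₁ : 0 < C₁) (hC₂ : 0 < C₂)
    (hE : ∀ μ, 0 ≤ μ → C₁ / (1 + μ) ≤ E μ ∧ E μ ≤ C₂ / (1 + μ))
    (hP : 0 < P) (hL : 0 < L) (hc : 0 ≤ c) :
    L * c / C₂ ≤ 1 / (P * L) * (1 / E (P * L ^ 2 * c)) := by
  have hμ : 0 ≤ P * L ^ 2 * c := by positivity
  obtain ⟨hlow, hup⟩ := hE _ hμ
  have hpos : 0 < E (P * L ^ 2 * c) := lt_of_lt_of_le (by positivity) hlow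
  calc L * c / C₂
      = 1 / (P * L) * (P * L ^ 2 * c / C₂) := by field_simp
    _ ≤ 1 / (P * L) * ((1 + P * L ^ 2 * c) / C₂) := by gcongr; linarith
    _ ≤ 1 / (P * L) * (1 / E (P * L ^ 2 * c)) :=
        mul_le_mul_of_nonneg_left (div_le_one_div_of_le_div_one_add hpos hup) (by positivity)

end TwoSidedBound

/-- `E μ` stands for `E_α(-μ)`, and `1 / (λₙ^β ln λₙ)` is the norm of the final datum `Φₙ`. -/
theorem backward_problem_instability_general (E : ℝ → ℝ) (C₁ C₂ α : ℝ)
    (hC₁ : 0 < C₁) (hC₂ : 0 < C₂)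
    (hE : ∀ μ : ℝ, 0 ≤ μ → C₁ / (1 + μ) ≤ E μ ∧ E μ ≤ C₂ / (1 + μ))
    (lam : ℕ → ℝ) (htop : Tendsto lam atTop atTop)
    (he : ∀ n, Real.exp 1 < lam n) (β T : ℝ) (hβ : 0 < β) (hT : 0 < T) :
    Tendsto (fun n => 1 / (lam n ^ β * Real.log (lam n))) atTop (nhds 0) ∧
    (∃ Cb : ℝ, ∀ n,
        1 / (lam n ^ β * Real.log (lam n)) * (1 / E (lam n ^ β * T ^ α)) ≤ Cb) ∧
    Tendsto (fun n =>
        1 / (lam n ^ β * Real.log (lam n)) *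
          (1 / E (lam n ^ (β + 2 * Real.log (Real.log (lam n)) / Real.log (lam n))
                    * T ^ α)))
      atTop atTop := by
  have hTα : 0 < T ^ α := rpow_pos_of_pos hT α
  have hlog : ∀ n, 1 < log (lam n) := fun n => by
    simpa using log_lt_log (exp_pos 1) (he n)
  have hlam : ∀ n, 1 < lam n := fun n => lt_trans (one_lt_exp_iff.mpr one_pos) (he n)
  have hrpow : ∀ n, 1 ≤ lam n ^ β := fun n => one_le_rpow (hlam n).le hβ.le
  refine ⟨?_, ⟨(1 + T ^ α) / C₁, fun n => ?_⟩, ?_⟩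
  · simpa only [one_div, Pi.inv_def, Function.comp_def] using
      ((tendsto_rpow_mul_log_atTop hβ).comp htop).inv_tendsto_atTop
  · exact one_div_mul_one_div_le hC₁ (fun μ hμ => (hE μ hμ).1) (hrpow n) (hlog n).le hTα.le
  · refine tendsto_atTop_mono (fun n => ?_)
      (((tendsto_log_atTop.comp htop).atTop_mul_const hTα).atTop_div_const hC₂)
    rw [rpow_add_two_mul_log_log_div_log (hlam n)]
    exact mul_div_le_one_div_mul_one_div hC₁ hC₂ hE (zero_lt_one.trans_le (hrpow n))
      (zero_lt_one.trans (hlog n)) hTα.le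

/-- ill-posedness example for the backward problem under perturbation of
the fractional order `β`. Here `E μ` stands for `E_α(-μ)` and satisfies the two-sided
algebraic bounds; `φ n = 1/(λₙ^β ln λₙ)` is the norm of the final datum `Φₙ`. -/
theorem backward_problem_instability (E : ℝ → ℝ) (C₁ C₂ α : ℝ)
    (hC₁ : 0 < C₁) (hC₂ : 0 < C₂) (hα : α ∈ Set.Ioo (0:ℝ) 1)
    (hE : ∀ μ : ℝ, 0 ≤ μ → C₁ / (1 + μ) ≤ E μ ∧ E μ ≤ C₂ / (1 + μ))
    (lam : ℕ → ℝ) (hmono : StrictMono lam) (htop : Tendsto lam atTop atTop)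
    (he : ∀ n, Real.exp 1 < lam n) (β T : ℝ) (hβ : 0 < β) (hT : 0 < T) :
    Tendsto (fun n => 1 / (lam n ^ β * Real.log (lam n))) atTop (nhds 0) ∧
    (∃ Cb : ℝ, ∀ n,
        1 / (lam n ^ β * Real.log (lam n)) * (1 / E (lam n ^ β * T ^ α)) ≤ Cb) ∧
    Tendsto (fun n =>
        1 / (lam n ^ β * Real.log (lam n)) *
          (1 / E (lam n ^ (β + 2 * Real.log (Real.log (lam n)) / Real.log (lam n))
                    * T ^ α)))
      atTop atTop :=
  backward_problem_instability_general E C₁ C₂ α hC₁ hC₂ hE lam htop he β T hβ hT
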